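/- arXiv:2105.08242 — 9 statements merged into one kernel-verified Lean document; each statement's English description precedes it below -/
import Mathlib

section
/- Let n ≥ 2 and let e = e_1⋯e_n be an inversion sequence (1 ≤ e_t ≤ t for all t) avoiding the pattern (≥,-,>), i.e., there are no indices a < b < c with e_a ≥ e_b and e_a > e_c. Suppose hght(e) = j and last(e) = e_n = i with i < j, where hght(e) = max{e_t : 1 ≤ t ≤ n-1 and e_t ≥ e_{t+1}}. Then the last two letters of e are j followed by i, i.e., e_{n-1} = j and e_n = i. -/
/-- `e` is an inversion sequence of length `n` (positive convention):
`1 ≤ e_t ≤ t` for all `1 ≤ t ≤ n` (0-indexed: `1 ≤ e[t] ≤ t+1`). -/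
def IsInvSeq (n : ℕ) (e : List ℕ) : Prop :=
  e.length = n ∧ ∀ t, t < n → 1 ≤ e[t]! ∧ e[t]! ≤ t + 1

/-- `e` avoids the pattern `(≥,-,>)`: there are no indices `a < b < c`
with `e_a ≥ e_b` and `e_a > e_c`. -/
def InvAvoids (e : List ℕ) : Prop :=
  ¬ ∃ a b c : ℕ, a < b ∧ b < c ∧ c < e.length ∧ e[b]! ≤ e[a]! ∧ e[c]! < e[a]!

/-- `hghtIs e j` says that the height of `e` is `j`, i.e. `j` is the greatest
value `e_t` (for `t` ranging over non-final positions) with `e_t ≥ e_{t+1}`. -/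
def hghtIs (e : List ℕ) (j : ℕ) : Prop :=
  IsGreatest {x | ∃ t, t + 1 < e.length ∧ e[t + 1]! ≤ e[t]! ∧ e[t]! = x} j

/-- The number of distinct values occurring in `e`. -/
def distList (e : List ℕ) : ℕ := e.toFinset.card

/-- If an avoiding inversion sequence of length `n ≥ 2` has height `j` and last
letter `i < j`, then its last two letters are `j` followed by `i`. -/
theorem stmt0 (n i j : ℕ) (hn : 2 ≤ n) (e : List ℕ)
    (he : IsInvSeq n e) (hav : InvAvoids e)
    (hh : hghtIs e j) (hl : e[n - 1]! = i) (hij : i < j) :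
    e[n - 2]! = j ∧ e[n - 1]! = i := by
  obtain ⟨t, ht1, ht2, ht3⟩ := hh.1
  have hlen : e.length = n := he.1
  rw [hlen] at ht1
  have htn : t + 1 ≤ n - 1 := by omega
  rcases lt_or_eq_of_le htn with h | h
  · exfalso
    exact hav ⟨t, t + 1, n - 1, by omega, h, by omega, ht2, by
      rw [hl, ht3]; exact hij⟩
  · have : t = n - 2 := by omega
    subst this
    exact ⟨ht3, hl⟩
end

section
/- Let U_n(i,j) denote the set of inversion sequences e of length n (1 ≤ e_t ≤ t) avoiding (≥,-,>) with e_n = i and hght(e) = j, and let dist(e) denote the number of distinct values appearing in e. Then for all n ≥ 3 and 1 ≤ j < i ≤ n and every d ≥ 1: the number of e ∈ U_n(i,j) with dist(e) = d equals the sum over ℓ = 1,…,i-1 of the number of e' ∈ U_{n-1}(ℓ,j) with dist(e') = d-1. -/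
/-!
Let `e ∈ U_n(i,j)` with `j < i`. Every weak descent top of `e` is at most `j`, so once an entry
exceeds `j` the sequence strictly increases from there on. Hence `e_{n-1} < e_n = i` (otherwise
`e_{n-1} ≥ i > j` would be a weak descent top), and in the prefix `e' = e_1 ⋯ e_{n-1}` every entry
`> j` is at most `e_{n-1} < i`. So `i` does not occur in `e'` and no occurrence of `(≥,-,>)` ends
at position `n`. Deleting the last entry is therefore a bijection from `U_n(i,j)` onto
`⋃_{ℓ < i} U_{n-1}(ℓ,j)` that lowers `dist` by exactly one.
-/

/-- The values `e_t` at the weak descents `e_t ≥ e_{t+1}`; `hght e` is their maximum. -/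
def weakDescentTops (e : List ℕ) : Set ℕ :=
  {x | ∃ t, t + 1 < e.length ∧ e[t + 1]! ≤ e[t]! ∧ e[t]! = x}

theorem hghtIs_iff {e : List ℕ} {j : ℕ} : hghtIs e j ↔ IsGreatest (weakDescentTops e) j :=
  Iff.rfl

/-- `avoidingInvSeqs n i j d` is the set of `e ∈ U_n(i,j)` with `dist e = d`. -/
def avoidingInvSeqs (n i j d : ℕ) : Set (List ℕ) :=
  {e | IsInvSeq n e ∧ InvAvoids e ∧ e[n - 1]! = i ∧ hghtIs e j ∧ distList e = d}

lemma getElem!_append_of_lt {α : Type*} [Inhabited α] {e f : List α} {t : ℕ}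
    (ht : t < e.length) : (e ++ f)[t]! = e[t]! := by
  rw [getElem!_pos (e ++ f) t (by simp; omega), getElem!_pos e t ht,
    List.getElem_append_left ht]

lemma getElem!_append_singleton_length {α : Type*} [Inhabited α] (e : List α) (x : α) :
    (e ++ [x])[e.length]! = x := by
  simp [getElem!_pos]

lemma finite_setOf_isInvSeq (m : ℕ) : {e | IsInvSeq m e}.Finite := by
  refine (Set.finite_range fun f : Fin m → Fin (m + 1) => List.ofFn fun t => (f t : ℕ)).subset ?_
  rintro e ⟨hlen, hbound⟩
  refine ⟨fun t => ⟨e[t.1]!, by have := (hbound t t.2).2; omega⟩,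
    List.ext_getElem (by simp [hlen]) fun t _ ht => ?_⟩
  simp [List.getElem?_eq_getElem ht]

lemma isInvSeq_append_singleton_iff {m x : ℕ} {e : List ℕ} :
    IsInvSeq (m + 1) (e ++ [x]) ↔ IsInvSeq m e ∧ 1 ≤ x ∧ x ≤ m + 1 := by
  constructor
  · rintro ⟨hlen, hbound⟩
    obtain rfl : e.length = m := by simpa using hlen
    refine ⟨⟨rfl, fun t ht => ?_⟩, ?_⟩
    · rw [← getElem!_append_of_lt (f := [x]) ht]
      exact hbound t (by omega)
    · simpa [getElem!_append_singleton_length] using hbound e.length (by omega)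
  · rintro ⟨⟨rfl, hbound⟩, hx⟩
    refine ⟨by simp, fun t ht => ?_⟩
    rcases Nat.lt_or_ge t e.length with ht' | ht'
    · rw [getElem!_append_of_lt ht']
      exact hbound t ht'
    · obtain rfl : t = e.length := by omega
      rwa [getElem!_append_singleton_length]

lemma distList_append_singleton {e : List ℕ} {x : ℕ} (hx : x ∉ e) :
    distList (e ++ [x]) = distList e + 1 := by
  simp [distList, List.toFinset_append, hx]

lemma invAvoids_of_append {e f : List ℕ} (h : InvAvoids (e ++ f)) : InvAvoids e := by
  rintro ⟨a, b, c, hab, hbc, hc, hba, hca⟩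
  refine h ⟨a, b, c, hab, hbc, by simp; omega, ?_, ?_⟩ <;>
    rwa [getElem!_append_of_lt (by omega), getElem!_append_of_lt (by omega)]

section UpperBound

variable {e : List ℕ} {j : ℕ}

lemma le_getElem!_of_mem_upperBounds (h : j ∈ upperBounds (weakDescentTops e)) {a t : ℕ}
    (hat : a ≤ t) (ht : t < e.length) (hj : j < e[a]!) : e[a]! ≤ e[t]! := by
  induction t, hat using Nat.le_induction with
  | base => rfl
  | succ t _ ih =>
    have hle := ih (by omega)
    have hasc : e[t]! < e[t + 1]! := by
      by_contra! hdesc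
      have := h ⟨t, ht, hdesc, rfl⟩
      omega
    omega

lemma weakDescentTops_append_singleton {x : ℕ} (hlt : e[e.length - 1]! < x) :
    weakDescentTops (e ++ [x]) = weakDescentTops e := by
  ext y
  constructor
  · rintro ⟨t, ht, hdesc, rfl⟩
    simp only [List.length_append, List.length_singleton] at ht
    have ht' : t + 1 < e.length := by
      by_contra
      obtain rfl : t = e.length - 1 := by omega
      rw [Nat.sub_add_cancel (by omega), getElem!_append_singleton_length,
        getElem!_append_of_lt (by omega)] at hdesc
      omega
    rw [getElem!_append_of_lt (t := t + 1) ht', getElem!_append_of_lt (t := t) (by omega)]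
      at hdesc
    exact ⟨t, ht', hdesc, (getElem!_append_of_lt (by omega)).symm⟩
  · rintro ⟨t, ht, hdesc, rfl⟩
    refine ⟨t, by simp; omega, ?_, getElem!_append_of_lt (by omega)⟩
    rwa [getElem!_append_of_lt (t := t + 1) ht, getElem!_append_of_lt (t := t) (by omega)]

lemma getElem!_length_sub_one_lt_of_mem_upperBounds {x : ℕ} (hne : e ≠ [])
    (h : j ∈ upperBounds (weakDescentTops (e ++ [x]))) (hjx : j < x) :
    e[e.length - 1]! < x := by
  have hpos : 0 < e.length := List.length_pos_iff.2 hne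
  by_contra! hge
  have hlast : (e ++ [x])[e.length - 1 + 1]! = x := by
    rw [Nat.sub_add_cancel hpos, getElem!_append_singleton_length]
  have := h ⟨e.length - 1, by simp; omega, by rwa [hlast, getElem!_append_of_lt (by omega)], rfl⟩
  rw [getElem!_append_of_lt (by omega)] at this
  omega

lemma not_mem_of_mem_upperBounds {x : ℕ} (h : j ∈ upperBounds (weakDescentTops e))
    (hjx : j < x) (hlt : e[e.length - 1]! < x) : x ∉ e := by
  intro hx
  obtain ⟨a, ha, rfl⟩ := List.getElem_of_mem hx
  have := le_getElem!_of_mem_upperBounds h (a := a) (t := e.length - 1) (by omega) (by omega)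
    (by rwa [getElem!_pos e a ha])
  rw [getElem!_pos e a ha] at this
  omega

lemma invAvoids_append_singleton {x : ℕ} (havoid : InvAvoids e)
    (h : j ∈ upperBounds (weakDescentTops e)) (hjx : j < x) (hlt : e[e.length - 1]! < x) :
    InvAvoids (e ++ [x]) := by
  rintro ⟨a, b, c, hab, hbc, hc, hba, hca⟩
  simp only [List.length_append, List.length_singleton] at hc
  rw [getElem!_append_of_lt (t := a) (by omega)] at hba hca
  rcases Nat.lt_or_ge c e.length with hc' | hc'
  · rw [getElem!_append_of_lt (t := b) (by omega)] at hba
    rw [getElem!_append_of_lt hc'] at hca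
    exact havoid ⟨a, b, c, hab, hbc, hc', hba, hca⟩
  · obtain rfl : c = e.length := by omega
    rw [getElem!_append_singleton_length] at hca
    -- `e_a > x > j`, so the entries grow from `e_a` up to the last one, which is `< x`.
    have := le_getElem!_of_mem_upperBounds h (a := a) (t := e.length - 1) (by omega) (by omega)
      (by omega)
    omega

lemma append_singleton_mem_avoidingInvSeqs_iff {m i j d : ℕ} {e : List ℕ} (hm : 1 ≤ m)
    (hji : j < i) (hi : i ≤ m + 1) (hd : 1 ≤ d) :
    e ++ [i] ∈ avoidingInvSeqs (m + 1) i j d ↔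
      e[m - 1]! < i ∧ e ∈ avoidingInvSeqs m e[m - 1]! j (d - 1) := by
  suffices key : e.length = m → e[m - 1]! < i →
      (e ++ [i] ∈ avoidingInvSeqs (m + 1) i j d ↔ e ∈ avoidingInvSeqs m e[m - 1]! j (d - 1)) by
    constructor
    · intro he
      obtain hlen : e.length = m := by simpa using he.1.1
      have hlt : e[m - 1]! < i := hlen ▸ getElem!_length_sub_one_lt_of_mem_upperBounds
        (List.ne_nil_of_length_pos (by omega)) he.2.2.2.1.2 hji
      exact ⟨hlt, (key hlen hlt).1 he⟩
    · rintro ⟨hlt, he⟩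
      exact (key he.1.1 hlt).2 he
  rintro rfl hlt
  simp only [avoidingInvSeqs, Set.mem_ofPred_eq, isInvSeq_append_singleton_iff, hghtIs_iff,
    weakDescentTops_append_singleton hlt, Nat.add_sub_cancel, getElem!_append_singleton_length]
  constructor
  · rintro ⟨⟨hseq, -⟩, havoid, -, hght, hdist⟩
    rw [distList_append_singleton (not_mem_of_mem_upperBounds hght.2 hji hlt)] at hdist
    exact ⟨hseq, invAvoids_of_append havoid, trivial, hght, by omega⟩
  · rintro ⟨hseq, havoid, -, hght, hdist⟩
    refine ⟨⟨hseq, by omega, hi⟩, invAvoids_append_singleton havoid hght.2 hji hlt, trivial, hght, ?_⟩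
    rw [distList_append_singleton (not_mem_of_mem_upperBounds hght.2 hji hlt)]
    omega

lemma avoidingInvSeqs_succ {m i j d : ℕ} (hm : 1 ≤ m) (hji : j < i) (hi : i ≤ m + 1)
    (hd : 1 ≤ d) :
    avoidingInvSeqs (m + 1) i j d =
      (· ++ [i]) '' ⋃ ℓ ∈ Set.Icc 1 (i - 1), avoidingInvSeqs m ℓ j (d - 1) := by
  ext e
  simp only [Set.mem_image, Set.mem_iUnion, Set.mem_Icc, exists_prop]
  constructor
  · intro he
    obtain ⟨hlen, -⟩ := he.1
    obtain ⟨e', x, rfl⟩ := (List.eq_nil_or_concat' e).resolve_left (List.ne_nil_of_length_pos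
      (by omega))
    obtain rfl : e'.length = m := by simpa using hlen
    obtain rfl : x = i := by simpa [getElem!_append_singleton_length] using he.2.2.1
    obtain ⟨hlt, he'⟩ := (append_singleton_mem_avoidingInvSeqs_iff hm hji hi hd).1 he
    exact ⟨e', ⟨_, ⟨(he'.1.2 _ (by omega)).1, by omega⟩, he'⟩, rfl⟩
  · rintro ⟨e', ⟨ℓ, ⟨hℓ, hℓi⟩, he'⟩, rfl⟩
    obtain rfl : e'[m - 1]! = ℓ := he'.2.2.1
    exact (append_singleton_mem_avoidingInvSeqs_iff hm hji hi hd).2 ⟨by omega, he'⟩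

lemma finite_avoidingInvSeqs (n i j d : ℕ) : (avoidingInvSeqs n i j d).Finite :=
  (finite_setOf_isInvSeq n).subset fun _ he => he.1

lemma pairwise_disjoint_avoidingInvSeqs (n j d : ℕ) :
    Pairwise (Function.onFun Disjoint fun i => avoidingInvSeqs n i j d) := fun _ _ hne =>
  Set.disjoint_left.2 fun _ h₁ h₂ => hne (h₁.2.2.1.symm.trans h₂.2.2.1)

theorem stmt1_general (n i j d : ℕ) (hn : 3 ≤ n) (hji : j < i) (hi : i ≤ n)
    (hd : 1 ≤ d) :
    {e : List ℕ | IsInvSeq n e ∧ InvAvoids e ∧ e[n - 1]! = i ∧ hghtIs e j ∧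
        distList e = d}.ncard
      = ∑ ℓ ∈ Finset.Icc 1 (i - 1),
        {e : List ℕ | IsInvSeq (n - 1) e ∧ InvAvoids e ∧ e[n - 2]! = ℓ ∧ hghtIs e j ∧
          distList e = d - 1}.ncard := by
  obtain ⟨m, rfl⟩ : ∃ m, n = m + 1 := ⟨n - 1, by omega⟩
  change (avoidingInvSeqs (m + 1) i j d).ncard =
    ∑ ℓ ∈ Finset.Icc 1 (i - 1), (avoidingInvSeqs m ℓ j (d - 1)).ncard
  rw [avoidingInvSeqs_succ (by omega) hji hi hd,
    Set.ncard_image_of_injective _ (List.append_left_injective [i]),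
    (Set.finite_Icc 1 (i - 1)).ncard_biUnion (fun ℓ _ => finite_avoidingInvSeqs m ℓ j (d - 1))
      ((pairwise_disjoint_avoidingInvSeqs m j (d - 1)).set_pairwise _),
    ← Finset.coe_Icc, finsum_mem_coe_finset]

/-- Recurrence for `u_n(i,j)` when `j < i`. -/
theorem stmt1 (n i j d : ℕ) (hn : 3 ≤ n) (hj : 1 ≤ j) (hji : j < i) (hi : i ≤ n)
    (hd : 1 ≤ d) :
    {e : List ℕ | IsInvSeq n e ∧ InvAvoids e ∧ e[n - 1]! = i ∧ hghtIs e j ∧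
        distList e = d}.ncard
      = ∑ ℓ ∈ Finset.Icc 1 (i - 1),
        {e : List ℕ | IsInvSeq (n - 1) e ∧ InvAvoids e ∧ e[n - 2]! = ℓ ∧ hghtIs e j ∧
          distList e = d - 1}.ncard :=
  stmt1_general n i j d hn hji hi hd
end UpperBound
end

section
/- For every n ≥ 2 there is no inversion sequence e of length n (with 1 ≤ e_t ≤ t) avoiding (≥,-,>) such that e_n = n and hght(e) = n-1. That is, the set U_n(n, n-1) is empty. -/
/-- The set `U_n(n, n-1)` is empty for `n ≥ 2`. -/
theorem stmt2 (n : ℕ) (hn : 2 ≤ n) (e : List ℕ) (he : IsInvSeq n e)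
    (hav : InvAvoids e) :
    ¬ (e[n - 1]! = n ∧ hghtIs e (n - 1)) := by
  rintro ⟨hlast, hmem, -⟩
  obtain ⟨t, ht1, ht2, ht3⟩ := hmem
  obtain ⟨hlen, hbd⟩ := he
  rw [hlen] at ht1
  have h1 := (hbd t (by omega)).2
  have h2 : t = n - 2 := by omega
  have h3 : t + 1 = n - 1 := by omega
  rw [h3, hlast] at ht2
  omega
end

section
/- For n ≥ 4, the map sending e = e_1⋯e_n to e' = e_1⋯e_{n-2} is a bijection from the set of inversion sequences of length n avoiding (≥,-,>) whose last two letters satisfy e_{n-1} = e_n = n-1, onto the set of all inversion sequences of length n-2 avoiding (≥,-,>); moreover dist(e) = dist(e') + 1 for every such e. -/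
lemma take_getElem!_aux (e : List ℕ) (m t : ℕ) (ht : t < m) (hm : m ≤ e.length) :
    (e.take m)[t]! = e[t]! := by
  have h1 : t < (e.take m).length := by simp; omega
  have h2 : t < e.length := by omega
  rw [getElem!_pos (e.take m) t h1, getElem!_pos e t h2, List.getElem_take]

lemma append_getElem!_left (l l' : List ℕ) (t : ℕ) (ht : t < l.length) :
    (l ++ l')[t]! = l[t]! := by
  have h1 : t < (l ++ l').length := by simp; omega
  rw [getElem!_pos (l ++ l') t h1, getElem!_pos l t ht, List.getElem_append_left]

lemma append_getElem!_right (l l' : List ℕ) (t : ℕ) (hl : l.length ≤ t)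
    (ht : t < l.length + l'.length) : (l ++ l')[t]! = l'[t - l.length]! := by
  have h1 : t < (l ++ l').length := by simp; omega
  have h2 : t - l.length < l'.length := by omega
  rw [getElem!_pos (l ++ l') t h1, getElem!_pos l' (t - l.length) h2,
    List.getElem_append_right hl]

/-- For `n ≥ 4`, dropping the last two letters is a bijection from avoiding
inversion sequences of length `n` ending `n-1, n-1` onto all avoiding inversion
sequences of length `n-2`, and it decreases `dist` by one. -/
theorem stmt4 (n : ℕ) (hn : 4 ≤ n) :
    Set.BijOn (fun e : List ℕ => e.take (n - 2))
      {e : List ℕ | IsInvSeq n e ∧ InvAvoids e ∧ e[n - 2]! = n - 1 ∧ e[n - 1]! = n - 1}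
      {e' : List ℕ | IsInvSeq (n - 2) e' ∧ InvAvoids e'} ∧
    ∀ e ∈ {e : List ℕ | IsInvSeq n e ∧ InvAvoids e ∧ e[n - 2]! = n - 1 ∧
        e[n - 1]! = n - 1},
      distList e = distList (e.take (n - 2)) + 1 := by
  have hmn : (n - 2) + 2 = n := by omega
  -- key decomposition of elements of the source set
  have key : ∀ e : List ℕ, IsInvSeq n e → e[n - 2]! = n - 1 → e[n - 1]! = n - 1 →
      e = e.take (n - 2) ++ [n - 1, n - 1] := by
    intro e he h1 h2
    obtain ⟨hlen, _⟩ := he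
    have hd : e.drop (n - 2) = [n - 1, n - 1] := by
      have hl : (e.drop (n - 2)).length = 2 := by simp [hlen]; omega
      apply List.ext_getElem (by simp [hl])
      intro i hi hi2
      rw [List.getElem_drop]
      have hi2' : i < 2 := by rwa [hl] at hi
      have hb : n - 2 + i < e.length := by omega
      rw [← getElem!_pos e (n - 2 + i) hb]
      interval_cases i
      · simpa using h1
      · have : n - 2 + 1 = n - 1 := by omega
        rw [this, h2]; rfl
    conv_lhs => rw [← List.take_append_drop (n - 2) e]
    rw [hd]
  have hvalbound : ∀ e' : List ℕ, IsInvSeq (n - 2) e' → ∀ v ∈ e', v < n - 1 := by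
    intro e' he' v hv
    obtain ⟨hlen, hbd⟩ := he'
    obtain ⟨i, hi, rfl⟩ := List.mem_iff_getElem.mp hv
    have h := (hbd i (by omega)).2
    rw [getElem!_pos e' i hi] at h
    omega
  -- the appended list is in the source set
  have hsurjmem : ∀ e' : List ℕ, IsInvSeq (n - 2) e' → InvAvoids e' →
      (e' ++ [n-1, n-1]) ∈ {e : List ℕ | IsInvSeq n e ∧ InvAvoids e ∧
        e[n - 2]! = n - 1 ∧ e[n - 1]! = n - 1} := by
    intro e' he' ha'
    obtain ⟨hlen, hbd⟩ := he'
    have hlen2 : (e' ++ [n-1, n-1]).length = n := by simp [hlen]; omega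
    have hget : ∀ t, n - 2 ≤ t → t < n → (e' ++ [n-1, n-1])[t]! = n - 1 := by
      intro t h1t h2t
      rw [append_getElem!_right _ _ _ (by omega) (by simp [hlen]; omega)]
      have : t - e'.length = 0 ∨ t - e'.length = 1 := by omega
      rcases this with h | h <;> simp [h]
    refine ⟨⟨hlen2, ?_⟩, ?_, hget (n-2) (by omega) (by omega), hget (n-1) (by omega) (by omega)⟩
    · intro t ht
      rcases lt_or_ge t (n - 2) with h | h
      · rw [append_getElem!_left _ _ _ (by omega)]
        exact hbd t h
      · rw [hget t h ht]; omega
    · rintro ⟨a, b, c, hab, hbc, hc, hba, hca⟩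
      rw [hlen2] at hc
      have hcm : c < n - 2 := by
        by_contra hcm
        push_neg at hcm
        have hc' : (e' ++ [n-1,n-1])[c]! = n - 1 := hget c hcm hc
        have ha2 : (e' ++ [n-1,n-1])[a]! ≤ a + 1 := by
          rcases lt_or_ge a (n - 2) with h | h
          · rw [append_getElem!_left _ _ _ (by omega)]
            exact (hbd a h).2
          · rw [hget a h (by omega)]; omega
        omega
      exact ha' ⟨a, b, c, hab, hbc, by omega, by
        rwa [append_getElem!_left _ _ _ (by omega), append_getElem!_left _ _ _ (by omega)] at hba, by
        rwa [append_getElem!_left _ _ _ (by omega), append_getElem!_left _ _ _ (by omega)] at hca⟩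
  have hmaps : ∀ e ∈ {e : List ℕ | IsInvSeq n e ∧ InvAvoids e ∧ e[n - 2]! = n - 1 ∧
        e[n - 1]! = n - 1}, (e.take (n - 2)) ∈ {e' : List ℕ | IsInvSeq (n - 2) e' ∧ InvAvoids e'} := by
    rintro e ⟨⟨hlen, hbd⟩, ha, h1, h2⟩
    have hlen' : (e.take (n - 2)).length = n - 2 := by rw [List.length_take, hlen]; omega
    refine ⟨⟨hlen', ?_⟩, ?_⟩
    · intro t ht
      rw [take_getElem!_aux _ _ _ ht (by omega)]
      exact hbd t (by omega)
    · rintro ⟨a, b, c, hab, hbc, hc, hba, hca⟩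
      rw [hlen'] at hc
      exact ha ⟨a, b, c, hab, hbc, by omega, by
        rwa [take_getElem!_aux _ _ _ (by omega) (by omega),
             take_getElem!_aux _ _ _ (by omega) (by omega)] at hba, by
        rwa [take_getElem!_aux _ _ _ (by omega) (by omega),
             take_getElem!_aux _ _ _ (by omega) (by omega)] at hca⟩
  constructor
  · refine ⟨hmaps, ?_, ?_⟩
    · rintro e1 ⟨he1, _, h11, h12⟩ e2 ⟨he2, _, h21, h22⟩ heq
      simp only at heq
      rw [key e1 he1 h11 h12, key e2 he2 h21 h22, heq]
    · rintro e' ⟨he', ha'⟩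
      refine ⟨e' ++ [n-1, n-1], hsurjmem e' he' ha', ?_⟩
      simp only
      rw [← he'.1, List.take_left]
  · rintro e he
    obtain ⟨he1, ha, h1, h2⟩ := he
    have hk := key e he1 h1 h2
    have htake : IsInvSeq (n - 2) (e.take (n - 2)) := (hmaps e ⟨he1, ha, h1, h2⟩).1
    have hnot : (n - 1) ∉ (e.take (n - 2)).toFinset := by
      simp only [List.mem_toFinset]
      intro hmem
      have := hvalbound _ htake _ hmem
      omega
    have hset : e.toFinset = insert (n - 1) (e.take (n - 2)).toFinset := by
      conv_lhs => rw [hk]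
      rw [List.toFinset_append]
      have h2' : ([n-1, n-1] : List ℕ).toFinset = {n-1} := by
        simp
      rw [h2', Finset.union_comm]; exact rfl
    rw [distList, distList, hset, Finset.card_insert_of_notMem hnot]
end

section
/- Fix n ≥ 2, 0 ≤ j ≤ n-2, and 1 ≤ ℓ ≤ n-1. The number of permutations π of [n] that can be written as π = α n β, where α is a nonempty increasing sequence with first letter ℓ, β is a decreasing sequence, and β has length j, equals the binomial coefficient C(n-ℓ-1, n-j-2). Moreover every such permutation has exactly j descents. -/
/-- The word `w` contains the pattern `p`: some subsequence of `w` is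
order-isomorphic to `p`. -/
def ContainsPat (w p : List ℕ) : Prop :=
  ∃ s : List ℕ, s.Sublist w ∧ s.length = p.length ∧
    ∀ i j : ℕ, i < p.length → j < p.length → (s[i]! < s[j]! ↔ p[i]! < p[j]!)

/-- The word `w` avoids the pattern `p`. -/
def AvoidsPat (w p : List ℕ) : Prop := ¬ ContainsPat w p

/-- `π` is the one-line notation of a permutation of `{1,…,n}`. -/
def IsPermList (n : ℕ) (π : List ℕ) : Prop :=
  π.Perm ((List.range n).map (· + 1))

/-- The number of descents of a word. -/
def descList (π : List ℕ) : ℕ :=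
  ((List.range (π.length - 1)).filter (fun t => decide (π[t + 1]! < π[t]!))).length

/-! A permutation `α n β` of this shape is determined by the set `S` of letters of `α` other
than `ℓ`: `α` is `ℓ` followed by `S` in increasing order and `β` is the rest of `[n-1] \ {ℓ}` in
decreasing order. Conversely every `(n-j-2)`-subset `S` of `{ℓ+1, …, n-1}` arises, which gives
the binomial coefficient. The descents are exactly the positions from that of `n` on, so there
are `|β| = j` of them. -/

namespace List

variable {α : Type*} [Inhabited α] {R : α → α → Prop}

theorem pairwise_take_iff_getElem! {l : List α} {k : ℕ} (hk : k ≤ l.length) :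
    (l.take k).Pairwise R ↔ ∀ a b, a < b → b < k → R l[a]! l[b]! := by
  rw [pairwise_iff_getElem]
  simp only [length_take, getElem_take]
  constructor
  · intro h a b hab hbk
    rw [getElem!_pos l a (by omega), getElem!_pos l b (by omega)]
    exact h a b (by omega) (by omega) hab
  · intro h a b ha hb hab
    have := h a b hab (by omega)
    rwa [getElem!_pos l a (by omega), getElem!_pos l b (by omega)] at this

theorem pairwise_drop_succ_iff_getElem! {l : List α} {k : ℕ} :
    (l.drop (k + 1)).Pairwise R ↔ ∀ a b, k < a → a < b → b < l.length → R l[a]! l[b]! := by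
  rw [pairwise_iff_getElem]
  simp only [length_drop, getElem_drop]
  constructor
  · intro h a b hka hab hb
    rw [getElem!_pos l a (by omega), getElem!_pos l b (by omega)]
    have := h (a - (k + 1)) (b - (k + 1)) (by omega) (by omega) (by omega)
    simpa [show k + 1 + (a - (k + 1)) = a by omega, show k + 1 + (b - (k + 1)) = b by omega]
      using this
  · intro h a b ha hb hab
    have := h (k + 1 + a) (k + 1 + b) (by omega) (by omega) (by omega)
    rwa [getElem!_pos l _ (by omega), getElem!_pos l _ (by omega)] at this

end List

theorem isPermList_iff {n : ℕ} {π : List ℕ} :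
    IsPermList n π ↔ π.Nodup ∧ ∀ x, x ∈ π ↔ 1 ≤ x ∧ x ≤ n := by
  have hnd : ((List.range n).map (· + 1)).Nodup := List.nodup_range.map (fun _ _ => by omega)
  have hmem : ∀ x, x ∈ (List.range n).map (· + 1) ↔ 1 ≤ x ∧ x ≤ n := fun x => by
    simp only [List.mem_map, List.mem_range]
    exact ⟨by rintro ⟨a, ha, rfl⟩; omega, fun h => ⟨x - 1, by omega, by omega⟩⟩
  refine ⟨fun h => ⟨h.symm.nodup hnd, fun x => (h.mem_iff).trans (hmem x)⟩, fun ⟨h, hx⟩ => ?_⟩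
  exact (List.perm_ext_iff_of_nodup h hnd).2 fun x => (hx x).trans (hmem x).symm

namespace IsPermList

variable {n : ℕ} {π : List ℕ}

theorem length_eq (h : IsPermList n π) : π.length = n := by simpa using List.Perm.length_eq h

theorem nodup (h : IsPermList n π) : π.Nodup := (isPermList_iff.1 h).1

theorem mem_iff (h : IsPermList n π) (x : ℕ) : x ∈ π ↔ 1 ≤ x ∧ x ≤ n := (isPermList_iff.1 h).2 x

theorem getElem!_lt (h : IsPermList n π) {i k : ℕ} (hi : i < n)
    (hk : k < n) (hkn : π[k]! = n) (hik : i ≠ k) : π[i]! < n := by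
  have hlen := h.length_eq
  rw [getElem!_pos π i (by omega)]
  rw [getElem!_pos π k (by omega)] at hkn
  have hle := ((h.mem_iff _).1 (List.getElem_mem (by omega : i < π.length))).2
  have hne : π[i] ≠ π[k] := fun he => hik (h.nodup.getElem_inj_iff.1 he)
  omega

end IsPermList

theorem length_filter_range_le (m k : ℕ) :
    ((List.range m).filter (fun t => decide (k ≤ t))).length = m - k := by
  induction m with
  | zero => simp
  | succ m ih =>
    rw [List.range_succ, List.filter_append, List.length_append, ih]
    by_cases h : k ≤ m <;> simp [h] <;> omega

theorem descList_eq_of_unimodal {l : List ℕ} {k : ℕ}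
    (hinc : ∀ a b, a < b → b ≤ k → l[a]! < l[b]!)
    (hdec : ∀ a b, k ≤ a → a < b → b < l.length → l[b]! < l[a]!) :
    descList l = l.length - 1 - k := by
  have hdesc : ∀ t ∈ List.range (l.length - 1),
      decide (l[t + 1]! < l[t]!) = decide (k ≤ t) := by
    intro t ht
    rw [List.mem_range] at ht
    by_cases htk : k ≤ t
    · simpa only [htk, decide_true, decide_eq_true_eq]
        using hdec t (t + 1) htk (by omega) (by omega)
    · simpa only [htk, decide_false, decide_eq_false_iff_not, not_lt]
        using (hinc t (t + 1) (by omega) (by omega)).le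
  rw [descList, List.filter_congr hdesc, length_filter_range_le]

def IsPeakPerm (n j ℓ : ℕ) (π : List ℕ) : Prop :=
  IsPermList n π ∧ ∃ k, k < n ∧ π[k]! = n ∧ 1 ≤ k ∧ n - 1 - k = j ∧
    π[0]! = ℓ ∧ (∀ a b, a < b → b < k → π[a]! < π[b]!) ∧
    (∀ a b, k < a → a < b → b < n → π[b]! < π[a]!)

theorem isPeakPerm_iff {n j ℓ : ℕ} {π : List ℕ} :
    IsPeakPerm n j ℓ π ↔ IsPermList n π ∧ ∃ s q, π = ℓ :: s ++ n :: q ∧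
      (ℓ :: s).Pairwise (· < ·) ∧ q.Pairwise (· > ·) ∧ q.length = j := by
  constructor
  · rintro ⟨hπ, k, hk, hkn, hk1, hkj, h0, hinc, hdec⟩
    have hlen := hπ.length_eq
    obtain ⟨k, rfl⟩ : ∃ k', k = k' + 1 := ⟨k - 1, by omega⟩
    obtain _ | ⟨x, t⟩ := π
    · simp only [List.length_nil] at hlen; omega
    obtain rfl : ℓ = x := by simpa using h0.symm
    simp only [List.length_cons] at hlen
    have htk : t[k] = n := by
      rw [getElem!_pos _ (k + 1) (by simp only [List.length_cons]; omega)] at hkn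
      simpa using hkn
    refine ⟨hπ, t.take k, t.drop (k + 1), ?_, ?_, ?_, by simp only [List.length_drop]; omega⟩
    · rw [List.cons_append, ← htk, ← List.drop_eq_getElem_cons, List.take_append_drop]
    · exact (List.pairwise_take_iff_getElem! (l := ℓ :: t)
        (by simp only [List.length_cons]; omega)).2 hinc
    · exact (List.pairwise_drop_succ_iff_getElem! (l := ℓ :: t) (k := k + 1)).2
        fun a b hka hab hb => hdec a b hka hab (by simp only [List.length_cons] at hb; omega)
  · rintro ⟨hπ, s, q, rfl, hs, hq, rfl⟩
    have hlen := hπ.length_eq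
    simp only [List.length_append, List.length_cons] at hlen
    refine ⟨hπ, s.length + 1, by omega, ?_, by omega, by omega, ?_, ?_, ?_⟩
    · rw [getElem!_pos _ (s.length + 1) (by simp)]
      simp
    · rfl
    · exact (List.pairwise_take_iff_getElem! (k := s.length + 1) (by simp)).1
        (by rwa [List.take_left' (by simp)])
    · have hq' : ((ℓ :: s ++ n :: q).drop (s.length + 1 + 1)).Pairwise (· > ·) := by
        rwa [List.cons_append, List.drop_succ_cons, List.drop_append,
          List.drop_eq_nil_of_le (by omega), List.nil_append, Nat.add_sub_cancel_left]
      exact fun a b hka hab hb => List.pairwise_drop_succ_iff_getElem!.1 hq' a b hka hab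
        (by simp only [List.length_append, List.length_cons]; omega)

theorem IsPeakPerm.descList_eq {n j ℓ : ℕ} {π : List ℕ} (h : IsPeakPerm n j ℓ π) :
    descList π = j := by
  obtain ⟨hπ, k, hk, hkn, -, hkj, -, hinc, hdec⟩ := h
  have hlen := hπ.length_eq
  rw [descList_eq_of_unimodal (k := k), hlen, hkj]
  · intro a b hab hbk
    rcases hbk.lt_or_eq with hbk | rfl
    · exact hinc a b hab hbk
    · rw [hkn]; exact hπ.getElem!_lt (by omega) hk hkn hab.ne
  · intro a b hka hab hb
    rcases hka.lt_or_eq with hka | rfl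
    · exact hdec a b hka hab (hlen ▸ hb)
    · rw [hkn]; exact hπ.getElem!_lt (by omega) hk hkn hab.ne'

def peakPerm (n ℓ : ℕ) (S : Finset ℕ) : List ℕ :=
  ℓ :: S.sort (· ≤ ·) ++ n :: ((Finset.Ioo 0 n \ insert ℓ S).sort (· ≤ ·)).reverse

theorem isPermList_peakPerm {n ℓ : ℕ} {S : Finset ℕ} (hS : S ⊆ Finset.Ioo ℓ n) (hℓ1 : 1 ≤ ℓ)
    (hℓ : ℓ < n) : IsPermList n (peakPerm n ℓ S) := by
  have hSlt : ∀ x ∈ S, ℓ < x ∧ x < n := fun x hx => Finset.mem_Ioo.1 (hS hx)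
  rw [isPermList_iff]
  constructor
  · simp only [peakPerm, List.nodup_append, List.nodup_cons, List.nodup_reverse, Finset.sort_nodup,
      Finset.mem_sort, List.mem_cons, List.mem_reverse, Finset.mem_sdiff, Finset.mem_Ioo,
      Finset.mem_insert]
    refine ⟨⟨fun h => (hSlt ℓ h).1.false, trivial⟩, ⟨by omega, trivial⟩, ?_⟩
    rintro x (rfl | hx) y (rfl | ⟨-, hy⟩) rfl
    · omega
    · exact hy (Or.inl rfl)
    · have := hSlt x hx; omega
    · exact hy (Or.inr hx)
  · intro x
    simp only [peakPerm, List.mem_append, List.mem_cons, Finset.mem_sort, List.mem_reverse,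
      Finset.mem_sdiff, Finset.mem_Ioo, Finset.mem_insert]
    by_cases hx : x ∈ S
    · have := hSlt x hx
      simp only [hx, or_true, true_or, true_iff]
      omega
    · simp only [hx, or_false]
      omega

theorem isPeakPerm_peakPerm {n j ℓ : ℕ} {S : Finset ℕ}
    (hS : S ∈ (Finset.Ioo ℓ n).powersetCard (n - j - 2)) (hj : j ≤ n - 2) (hℓ1 : 1 ≤ ℓ)
    (hℓ : ℓ ≤ n - 1) : IsPeakPerm n j ℓ (peakPerm n ℓ S) := by
  rw [Finset.mem_powersetCard] at hS
  have hSlt : ∀ x ∈ S, ℓ < x ∧ x < n := fun x hx => Finset.mem_Ioo.1 (hS.1 hx)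
  have hℓS : ℓ ∉ S := fun h => (hSlt ℓ h).1.false
  have hsub : insert ℓ S ⊆ Finset.Ioo 0 n := by
    intro x hx
    rcases Finset.mem_insert.1 hx with rfl | hx
    · exact Finset.mem_Ioo.2 ⟨by omega, by omega⟩
    · exact Finset.mem_Ioo.2 ⟨by have := hSlt x hx; omega, (hSlt x hx).2⟩
  rw [isPeakPerm_iff]
  refine ⟨isPermList_peakPerm hS.1 hℓ1 (by omega), _, _, rfl, ?_, ?_, ?_⟩
  · exact List.pairwise_cons.2
      ⟨fun x hx => (hSlt x ((Finset.mem_sort _).1 hx)).1, (Finset.sortedLT_sort S).pairwise⟩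
  · exact List.pairwise_reverse.2 (Finset.sortedLT_sort _).pairwise
  · rw [List.length_reverse, Finset.length_sort, Finset.card_sdiff_of_subset hsub,
      Finset.card_insert_of_notMem hℓS, Nat.card_Ioo, hS.2]
    omega

theorem exists_peakPerm_eq {n j ℓ : ℕ} {π : List ℕ} (h : IsPeakPerm n j ℓ π) :
    ∃ S ∈ (Finset.Ioo ℓ n).powersetCard (n - j - 2), peakPerm n ℓ S = π := by
  obtain ⟨hπ, s, q, rfl, hs, hq, rfl⟩ := isPeakPerm_iff.1 h
  have hlen := hπ.length_eq
  simp only [List.length_append, List.length_cons] at hlen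
  have hmem := hπ.mem_iff
  obtain ⟨⟨-, hsnd⟩, ⟨hnq, hqnd⟩, hdisj⟩ := by
    simpa only [List.nodup_append, List.nodup_cons] using hπ.nodup
  have hs_lt : ∀ x ∈ s, ℓ < x ∧ x < n := fun x hx =>
    ⟨List.rel_of_pairwise_cons hs hx, lt_of_le_of_ne ((hmem x).1 (by simp [hx])).2
      (hdisj x (List.mem_cons_of_mem ℓ hx) n List.mem_cons_self)⟩
  have hC : Finset.Ioo 0 n \ insert ℓ s.toFinset = q.reverse.toFinset := by
    ext x
    simp only [Finset.mem_sdiff, Finset.mem_Ioo, Finset.mem_insert, List.mem_toFinset,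
      List.mem_reverse]
    constructor
    · rintro ⟨⟨hx0, hxn⟩, hx⟩
      have := (hmem x).2 ⟨hx0, hxn.le⟩
      simp only [List.mem_append, List.mem_cons] at this
      rcases this with h | rfl | h
      · exact absurd h hx
      · exact absurd hxn (lt_irrefl x)
      · exact h
    · intro hx
      have hx' := (hmem x).1 (by simp [hx])
      refine ⟨⟨hx'.1, lt_of_le_of_ne hx'.2 fun h => hnq (h ▸ hx)⟩, fun h => ?_⟩
      exact hdisj x (List.mem_cons.2 h) x (List.mem_cons_of_mem n hx) rfl
  refine ⟨s.toFinset, Finset.mem_powersetCard.2 ⟨fun x hx => ?_, ?_⟩, ?_⟩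
  · exact Finset.mem_Ioo.2 (hs_lt x (List.mem_toFinset.1 hx))
  · rw [List.toFinset_card_of_nodup hsnd]
    omega
  · rw [peakPerm, hC, (List.toFinset_sort _ hsnd).2 (hs.of_cons.imp le_of_lt),
      (List.toFinset_sort _ (List.nodup_reverse.2 hqnd)).2
        (List.pairwise_reverse.2 (hq.imp le_of_lt)), List.reverse_reverse]

theorem peakPerm_injOn (n ℓ m : ℕ) : Set.InjOn (peakPerm n ℓ) {S | S.card = m} := by
  intro S hS T hT h
  rw [peakPerm, peakPerm, List.cons_append, List.cons_append, List.cons.injEq] at h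
  have hsort := (List.append_inj h.2 (by
    rw [Finset.length_sort, Finset.length_sort]
    exact (hS : S.card = m).trans (hT : T.card = m).symm)).1
  rw [← S.sort_toFinset (· ≤ ·), hsort, Finset.sort_toFinset]

theorem setOf_isPeakPerm_eq_image {n j ℓ : ℕ} (hj : j ≤ n - 2) (hℓ1 : 1 ≤ ℓ) (hℓ : ℓ ≤ n - 1) :
    {π | IsPeakPerm n j ℓ π} = peakPerm n ℓ '' ↑((Finset.Ioo ℓ n).powersetCard (n - j - 2)) := by
  ext π
  exact ⟨exists_peakPerm_eq, by rintro ⟨S, hS, rfl⟩; exact isPeakPerm_peakPerm hS hj hℓ1 hℓ⟩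

theorem stmt5_general (n j ℓ : ℕ) (hj : j ≤ n - 2) (hℓ1 : 1 ≤ ℓ)
    (hℓ : ℓ ≤ n - 1) :
    {π : List ℕ | IsPermList n π ∧ ∃ k, k < n ∧ π[k]! = n ∧ 1 ≤ k ∧ n - 1 - k = j ∧
        π[0]! = ℓ ∧ (∀ a b, a < b → b < k → π[a]! < π[b]!) ∧
        (∀ a b, k < a → a < b → b < n → π[b]! < π[a]!)}.ncard
      = Nat.choose (n - ℓ - 1) (n - j - 2) ∧
    ∀ π ∈ {π : List ℕ | IsPermList n π ∧ ∃ k, k < n ∧ π[k]! = n ∧ 1 ≤ k ∧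
        n - 1 - k = j ∧ π[0]! = ℓ ∧ (∀ a b, a < b → b < k → π[a]! < π[b]!) ∧
        (∀ a b, k < a → a < b → b < n → π[b]! < π[a]!)},
      descList π = j := by
  refine ⟨?_, fun π hπ => IsPeakPerm.descList_eq hπ⟩
  have hinj : Set.InjOn (peakPerm n ℓ) ↑((Finset.Ioo ℓ n).powersetCard (n - j - 2)) :=
    (peakPerm_injOn n ℓ _).mono fun S hS => (Finset.mem_powersetCard.1 hS).2
  change {π | IsPeakPerm n j ℓ π}.ncard = _
  rw [setOf_isPeakPerm_eq_image hj hℓ1 hℓ, hinj.ncard_image, Set.ncard_coe_finset,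
    Finset.card_powersetCard, Nat.card_Ioo]

/-- Permutations of `[n]` of the form `α n β` with `α` nonempty increasing with
first letter `ℓ` and `β` decreasing of length `j` are counted by
`C(n-ℓ-1, n-j-2)`, and each has exactly `j` descents. -/
theorem stmt5 (n j ℓ : ℕ) (hn : 2 ≤ n) (hj : j ≤ n - 2) (hℓ1 : 1 ≤ ℓ)
    (hℓ : ℓ ≤ n - 1) :
    {π : List ℕ | IsPermList n π ∧ ∃ k, k < n ∧ π[k]! = n ∧ 1 ≤ k ∧ n - 1 - k = j ∧
        π[0]! = ℓ ∧ (∀ a b, a < b → b < k → π[a]! < π[b]!) ∧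
        (∀ a b, k < a → a < b → b < n → π[b]! < π[a]!)}.ncard
      = Nat.choose (n - ℓ - 1) (n - j - 2) ∧
    ∀ π ∈ {π : List ℕ | IsPermList n π ∧ ∃ k, k < n ∧ π[k]! = n ∧ 1 ≤ k ∧
        n - 1 - k = j ∧ π[0]! = ℓ ∧ (∀ a b, a < b → b < k → π[a]! < π[b]!) ∧
        (∀ a b, k < a → a < b → b < n → π[b]! < π[a]!)},
      descList π = j :=
  stmt5_general n j ℓ hj hℓ1 hℓ
end

section
/- Let π be a permutation of {2,3,…,n+1} written in one-line notation. Then all n+1 insertions of the letter 1 into π (into any of the n+1 gaps, including the two ends) produce a permutation of [n+1] avoiding both patterns 1324 and 1423, if and only if π avoids both patterns 213 and 312. -/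
lemma filter_insertIdx_one (p : ℕ) (l : List ℕ) :
    (l.insertIdx p 1).filter (fun x => x ≠ 1) = l.filter (fun x => x ≠ 1) := by
  induction l generalizing p with
  | nil => cases p <;> simp [List.insertIdx]
  | cons h t ih => cases p with
    | zero => simp
    | succ q =>
      have h2 := ih q
      simp only [ne_eq, decide_not] at h2
      simp [List.insertIdx_succ_cons, List.filter_cons, h2]

lemma sublist_of_insertIdx {s l : List ℕ} {p : ℕ} (h : s.Sublist (l.insertIdx p 1))
    (hs : 1 ∉ s) (hl : 1 ∉ l) : s.Sublist l := by
  have h2 := h.filter (fun x => x ≠ 1)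
  rwa [filter_insertIdx_one, List.filter_eq_self.2, List.filter_eq_self.2] at h2
  · intro a ha; simp; exact fun e => hl (e ▸ ha)
  · intro a ha; simp; exact fun e => hs (e ▸ ha)

/-- For a permutation `π` of `{2,…,n+1}`, all `n+1` insertions of the letter `1`
produce a permutation of `[n+1]` avoiding `1324` and `1423` iff `π` avoids both
`213` and `312`. -/
theorem stmt6 (n : ℕ) (π : List ℕ) (hπ : π.Perm ((List.range n).map (· + 2))) :
    (∀ p ≤ n, AvoidsPat (π.insertIdx p 1) [1,3,2,4] ∧
        AvoidsPat (π.insertIdx p 1) [1,4,2,3])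
      ↔ (AvoidsPat π [2,1,3] ∧ AvoidsPat π [3,1,2]) := by
  have hmem : ∀ x ∈ π, 2 ≤ x := by
    intro x hx
    have := hπ.mem_iff.1 hx
    simp only [List.mem_map, List.mem_range] at this
    obtain ⟨t, -, rfl⟩ := this
    omega
  have h1π : 1 ∉ π := fun h => by have := hmem 1 h; omega
  constructor
  · rintro hall
    obtain ⟨h1324, h1423⟩ := hall 0 (Nat.zero_le n)
    rw [List.insertIdx_zero] at h1324 h1423
    constructor
    · rintro ⟨s, hs, hlen, hord⟩
      match s, hlen with
      | [a, b, c], _ =>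
        have hab : b < a := by
          have := hord 1 0 (by norm_num) (by norm_num)
          simp [getElem!_pos] at this; omega
        have hbc : a < c := by
          have := hord 0 2 (by norm_num) (by norm_num)
          simp [getElem!_pos] at this; omega
        have hb1 : 1 < b := hmem b (hs.mem (by simp))
        exact h1324 ⟨[1, a, b, c], (hs.cons₂ 1), by simp, by
          intro i j hi hj
          simp only [List.length_cons, List.length_nil] at hi hj
          interval_cases i <;> interval_cases j <;> simp [getElem!_pos] <;> omega⟩
    · rintro ⟨s, hs, hlen, hord⟩
      match s, hlen with
      | [a, b, c], _ =>
        have hab : b < a := by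
          have := hord 1 0 (by norm_num) (by norm_num)
          simp [getElem!_pos] at this; omega
        have hbc : b < c := by
          have := hord 1 2 (by norm_num) (by norm_num)
          simp [getElem!_pos] at this; omega
        have hca : c < a := by
          have := hord 2 0 (by norm_num) (by norm_num)
          simp [getElem!_pos] at this; omega
        have hb1 : 1 < b := hmem b (hs.mem (by simp))
        exact h1423 ⟨[1, a, b, c], (hs.cons₂ 1), by simp, by
          intro i j hi hj
          simp only [List.length_cons, List.length_nil] at hi hj
          interval_cases i <;> interval_cases j <;> simp [getElem!_pos] <;> omega⟩
  · rintro ⟨h213, h312⟩ p hp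
    have hπlen : π.length = n := by simpa using hπ.length_eq
    have hpl : p ≤ π.length := by omega
    constructor
    · rintro ⟨s, hs, hlen, hord⟩
      match s, hlen with
      | [a, b, c, d], _ =>
        have h1 : a < b := by
          have := hord 0 1 (by norm_num) (by norm_num)
          simp [getElem!_pos] at this; omega
        have h2 : c < b := by
          have := hord 2 1 (by norm_num) (by norm_num)
          simp [getElem!_pos] at this; omega
        have h3 : b < d := by
          have := hord 1 3 (by norm_num) (by norm_num)
          simp [getElem!_pos] at this; omega
        have h4 : a < c := by
          have := hord 0 2 (by norm_num) (by norm_num)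
          simp [getElem!_pos] at this; omega
        have ha : 1 ≤ a := by
          have hm := hs.mem (show a ∈ [a,b,c,d] by simp)
          rcases (List.mem_insertIdx hpl).1 hm with h | h
          · omega
          · have := hmem a h; omega
        have hsub : [b, c, d].Sublist π := by
          refine sublist_of_insertIdx (((List.sublist_cons_self a [b,c,d]).trans hs)) ?_ h1π
          simp; omega
        exact h213 ⟨[b, c, d], hsub, by simp, by
          intro i j hi hj
          simp only [List.length_cons, List.length_nil] at hi hj
          interval_cases i <;> interval_cases j <;> simp [getElem!_pos] <;> omega⟩
    · rintro ⟨s, hs, hlen, hord⟩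
      match s, hlen with
      | [a, b, c, d], _ =>
        have h1 : a < c := by
          have := hord 0 2 (by norm_num) (by norm_num)
          simp [getElem!_pos] at this; omega
        have h2 : c < d := by
          have := hord 2 3 (by norm_num) (by norm_num)
          simp [getElem!_pos] at this; omega
        have h3 : d < b := by
          have := hord 3 1 (by norm_num) (by norm_num)
          simp [getElem!_pos] at this; omega
        have ha : 1 ≤ a := by
          have hm := hs.mem (show a ∈ [a,b,c,d] by simp)
          rcases (List.mem_insertIdx hpl).1 hm with h | h
          · omega
          · have := hmem a h; omega
        have hsub : [b, c, d].Sublist π := by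
          refine sublist_of_insertIdx (((List.sublist_cons_self a [b,c,d]).trans hs)) ?_ h1π
          simp; omega
        exact h312 ⟨[b, c, d], hsub, by simp, by
          intro i j hi hj
          simp only [List.length_cons, List.length_nil] at hi hj
          interval_cases i <;> interval_cases j <;> simp [getElem!_pos] <;> omega⟩
end

section
/- Let π be a permutation of {2,3,…,n+1} that avoids the patterns 1324 and 1423. If inserting the letter 1 into some gap p of π produces a permutation of [n+1] avoiding 1324 and 1423, then inserting 1 into any gap strictly to the right of p also produces a permutation avoiding 1324 and 1423. In other words, the set of active sites of π is a final segment of the n+1 gaps. -/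
lemma insertIdx_eq_take_cons_drop {α : Type*} (a : α) :
    ∀ (n : ℕ) (l : List α), n ≤ l.length →
      l.insertIdx n a = l.take n ++ a :: l.drop n
  | 0, l, _ => by simp [List.insertIdx_zero]
  | n + 1, [], h => by simp at h
  | n + 1, x :: l, h => by
    simp only [List.insertIdx_succ_cons, List.take_succ_cons, List.drop_succ_cons,
      List.cons_append]
    rw [insertIdx_eq_take_cons_drop a n l (Nat.le_of_succ_le_succ h)]

/-- Core lemma: any occurrence of a pattern from `{1324, 1423}` in `π` with `1`
inserted at gap `q` yields an occurrence in `π` itself or in `π` with `1`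
inserted at an earlier gap `p`. -/
lemma key_lemma (π : List ℕ) (hπ2 : ∀ x ∈ π, 2 ≤ x) (pat : List ℕ)
    (hpat : pat = [1,3,2,4] ∨ pat = [1,4,2,3])
    (p q : ℕ) (hpq : p ≤ q) (hq : q ≤ π.length)
    (hC : ContainsPat (π.insertIdx q 1) pat) :
    ContainsPat π pat ∨ ContainsPat (π.insertIdx p 1) pat := by
  obtain ⟨s, hsub, hlen, hiso⟩ := hC
  rw [insertIdx_eq_take_cons_drop 1 q π hq] at hsub
  rw [List.sublist_append_iff] at hsub
  obtain ⟨s₁, s₂, rfl, h₁, h₂⟩ := hsub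
  rw [List.sublist_cons_iff] at h₂
  have hpatlen : pat.length = 4 := by rcases hpat with rfl | rfl <;> rfl
  rcases h₂ with h₂ | ⟨r, rfl, hr⟩
  · -- the inserted 1 is not used: pattern occurs in π
    left
    refine ⟨s₁ ++ s₂, ?_, hlen, hiso⟩
    rw [← List.take_append_drop q π]
    exact h₁.append h₂
  · -- the inserted 1 is used; show s₁ = []
    right
    have hs1 : s₁ = [] := by
      by_contra hne
      have hpos : 0 < s₁.length := List.length_pos_iff.mpr hne
      -- s[0]! is an element of take q π, hence ≥ 2
      have hlen' : (s₁ ++ 1 :: r).length = 4 := by rw [hlen, hpatlen]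
      have h0lt : 0 < (s₁ ++ 1 :: r).length := by omega
      have hs0mem : (s₁ ++ 1 :: r)[0] ∈ s₁ := by
        rw [List.getElem_append_left hpos]
        exact List.getElem_mem _
      have hs0ge : 2 ≤ (s₁ ++ 1 :: r)[0] := by
        have hmem : (s₁ ++ 1 :: r)[0] ∈ π :=
          (List.take_sublist q π).mem (h₁.mem hs0mem)
        exact hπ2 _ hmem
      -- the 1 sits at index s₁.length
      have hilt : s₁.length < (s₁ ++ 1 :: r).length := by
        simp [List.length_append]
      have hone : (s₁ ++ 1 :: r)[s₁.length] = 1 := by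
        rw [List.getElem_append_right (Nat.le_refl _)]
        simp
      have hi4 : s₁.length < 4 := by omega
      have := hiso s₁.length 0 (by omega) (by omega)
      rw [getElem!_pos (s₁ ++ 1 :: r) s₁.length hilt, getElem!_pos (s₁ ++ 1 :: r) 0 h0lt, hone] at this
      -- pat[s₁.length]! > pat[0]! = 1 since s₁.length ∈ {1,2,3}
      have hpat0 : pat[0]! = 1 := by rcases hpat with rfl | rfl <;> rfl
      have hpatk : 1 < pat[s₁.length]! := by
        rcases hpat with rfl | rfl <;>
          (interval_cases h : s₁.length <;> simp_all <;> omega)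
      rw [hpat0] at this
      omega
    subst hs1
    simp only [List.nil_append] at *
    refine ⟨1 :: r, ?_, hlen, hiso⟩
    rw [insertIdx_eq_take_cons_drop 1 p π (le_trans hpq hq)]
    have hdrop : (π.drop q).Sublist (π.drop p) := by
      have : π.drop q = (π.drop p).drop (q - p) := by
        rw [List.drop_drop]
        congr 1
        omega
      rw [this]
      exact List.drop_sublist _ _
    exact ((hr.trans hdrop).cons₂ 1).trans (List.sublist_append_right _ _)

/-- For a `{1324,1423}`-avoiding permutation of `{2,…,n+1}`, the active sites
form a final segment of the `n+1` gaps. -/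
theorem stmt7 (n : ℕ) (π : List ℕ) (hπ : π.Perm ((List.range n).map (· + 2)))
    (hav1 : AvoidsPat π [1,3,2,4]) (hav2 : AvoidsPat π [1,4,2,3])
    (p : ℕ) (hp : p ≤ n)
    (hgood1 : AvoidsPat (π.insertIdx p 1) [1,3,2,4])
    (hgood2 : AvoidsPat (π.insertIdx p 1) [1,4,2,3]) :
    ∀ q, p ≤ q → q ≤ n →
      AvoidsPat (π.insertIdx q 1) [1,3,2,4] ∧ AvoidsPat (π.insertIdx q 1) [1,4,2,3] := by
  intro q hpq hqn
  have hlen : π.length = n := by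
    rw [hπ.length_eq, List.length_map, List.length_range]
  have hπ2 : ∀ x ∈ π, 2 ≤ x := by
    intro x hx
    have := hπ.mem_iff.mp hx
    simp only [List.mem_map, List.mem_range] at this
    obtain ⟨k, _, rfl⟩ := this
    omega
  constructor
  · intro hC
    rcases key_lemma π hπ2 _ (Or.inl rfl) p q hpq (by omega) hC with h | h
    · exact hav1 h
    · exact hgood1 h
  · intro hC
    rcases key_lemma π hπ2 _ (Or.inr rfl) p q hpq (by omega) hC with h | h
    · exact hav2 h
    · exact hgood2 h
end

section
/- Fix n ≥ 2 and 1 ≤ i ≤ n-1. The map deleting the second letter i+1 of π and decreasing every letter greater than i by one is a bijection from the set of permutations of [n] avoiding {1324, 1342} with π_1 = i and π_2 = i+1, onto the set of permutations of [n-1] avoiding {1324, 1342} with first letter i. Moreover this map preserves the number of descents. -/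
/-- Decrease every letter greater than `i` by one. -/
def reduceGt (i : ℕ) (l : List ℕ) : List ℕ := l.map (fun x => if i < x then x - 1 else x)

/-!
Write `π = i (i+1) t`. Deleting `i + 1` and lowering the letters above `i` relabels the word
`i t` by a map that is strictly increasing on its letters, so it changes neither descents nor
pattern occurrences; and `i (i+1) t` has as many descents as `i t`, because no letter of `t`
lies between `i` and `i + 1`. Both `1324` and `1342` start with their minimum and have a later
letter strictly between their first two, so an occurrence in `π` using `i + 1` either moves to
`i` or would need a letter strictly between `i` and `i + 1`. The inverse map reinserts `i + 1`
after `i` and raises the letters above `i`.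
-/

def raiseGt (i : ℕ) (l : List ℕ) : List ℕ := l.map (fun x => if i < x then x + 1 else x)

lemma reduceGt_raiseGt (i : ℕ) (l : List ℕ) : reduceGt i (raiseGt i l) = l := by
  simp only [reduceGt, raiseGt, List.map_map]
  refine (List.map_congr_left fun x _ => ?_).trans (List.map_id l)
  dsimp only [Function.comp, id]; split_ifs <;> omega

lemma raiseGt_reduceGt {i : ℕ} {l : List ℕ} (h : i + 1 ∉ l) : raiseGt i (reduceGt i l) = l := by
  simp only [reduceGt, raiseGt, List.map_map]
  refine (List.map_congr_left fun x hx => ?_).trans (List.map_id l)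
  have : x ≠ i + 1 := fun hx' => h (hx' ▸ hx)
  dsimp only [Function.comp, id]; split_ifs <;> omega

lemma reduceGt_cons_self (i : ℕ) (l : List ℕ) : reduceGt i (i :: l) = i :: reduceGt i l := by
  simp [reduceGt]

lemma raiseGt_cons_self (i : ℕ) (l : List ℕ) : raiseGt i (i :: l) = i :: raiseGt i l := by
  simp [raiseGt]

lemma reduceGt_cons_raiseGt (i : ℕ) (l : List ℕ) : reduceGt i (i :: raiseGt i l) = i :: l := by
  rw [reduceGt_cons_self, reduceGt_raiseGt]

lemma add_one_notMem_raiseGt (i : ℕ) (l : List ℕ) : i + 1 ∉ raiseGt i l := by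
  simp only [raiseGt, List.mem_map, not_exists, not_and]
  intro x _
  split_ifs <;> omega

lemma strictMonoOn_reduce (i : ℕ) :
    StrictMonoOn (fun x => if i < x then x - 1 else x) {x | x ≠ i + 1} := by
  intro x (hx : x ≠ i + 1) y (hy : y ≠ i + 1) hxy
  dsimp only
  split_ifs <;> omega

lemma getElem!_map_of_lt_length (f : ℕ → ℕ) {l : List ℕ} {k : ℕ} (h : k < l.length) :
    (l.map f)[k]! = f l[k]! := by
  rw [getElem!_pos l k h, getElem!_pos (l.map f) k (by simpa using h), List.getElem_map]

lemma ContainsPat.mono {w w' p : List ℕ} (h : ContainsPat w p) (hw : w.Sublist w') :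
    ContainsPat w' p :=
  let ⟨s, hs, hl, hiso⟩ := h
  ⟨s, hs.trans hw, hl, hiso⟩

lemma containsPat_map_iff {f : ℕ → ℕ} {w : List ℕ} (hf : StrictMonoOn f {x | x ∈ w})
    (p : List ℕ) : ContainsPat (w.map f) p ↔ ContainsPat w p := by
  have map_lt_iff : ∀ s : List ℕ, s.Sublist w → ∀ a b, a < s.length → b < s.length →
      ((s.map f)[a]! < (s.map f)[b]! ↔ s[a]! < s[b]!) := by
    intro s hs a b ha hb
    rw [getElem!_map_of_lt_length f ha, getElem!_map_of_lt_length f hb]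
    exact hf.lt_iff_lt (hs.subset (getElem!_pos s a ha ▸ List.getElem_mem ha))
      (hs.subset (getElem!_pos s b hb ▸ List.getElem_mem hb))
  constructor
  · rintro ⟨s, hs, hl, hiso⟩
    obtain ⟨s, hs', rfl⟩ := List.sublist_map_iff.mp hs
    rw [List.length_map] at hl
    exact ⟨s, hs', hl, fun a b ha hb =>
      (map_lt_iff s hs' a b (hl ▸ ha) (hl ▸ hb)).symm.trans (hiso a b ha hb)⟩
  · rintro ⟨s, hs, hl, hiso⟩
    exact ⟨s.map f, hs.map f, by rw [List.length_map, hl], fun a b ha hb =>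
      (map_lt_iff s hs a b (hl ▸ ha) (hl ▸ hb)).trans (hiso a b ha hb)⟩

lemma containsPat_cons_succ_cons_iff {p : List ℕ}
    (hmin : ∀ j < p.length, 0 < j → p[0]! < p[j]!)
    (hgap : ∃ j < p.length, 1 < j ∧ p[0]! < p[j]! ∧ p[j]! < p[1]!) (a : ℕ) (t : List ℕ) :
    ContainsPat (a :: (a + 1) :: t) p ↔ ContainsPat (a :: t) p := by
  refine ⟨fun ⟨s, hs, hl, hiso⟩ => ?_, fun h => h.mono ((List.sublist_cons_self _ t).cons_cons a)⟩
  cases hs with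
  | cons _ hs =>
    cases hs with
    | cons _ hs => exact ⟨s, hs.cons a, hl, hiso⟩
    | cons_cons _ hs =>
      -- `a + 1` plays the minimum `p[0]`, so `a` can take its place
      rename_i s₁
      have hgt : ∀ k, k + 1 < p.length → a + 1 < s₁[k]! := fun k hk => by
        simpa using (hiso 0 (k + 1) (by omega) hk).mpr (hmin (k + 1) hk k.succ_pos)
      refine ⟨a :: s₁, hs.cons_cons a, by simpa using hl, fun x y hx hy => ?_⟩
      rw [← hiso x y hx hy]
      rcases x with _ | x <;> rcases y with _ | y <;>
        simp only [List.getElem!_cons_zero, List.getElem!_cons_succ]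
      · simp
      · have := hgt y hy; omega
      · have := hgt x hx; omega
  | cons_cons _ hs =>
    cases hs with
    | cons _ hs => exact ⟨_, hs.cons_cons a, hl, hiso⟩
    | cons_cons _ hs =>
      -- `a` and `a + 1` would play `p[0]` and `p[1]`, with no room for `p[j]` between them
      obtain ⟨j, hj, hj1, h0j, hj1'⟩ := hgap
      have h0 := (hiso 0 j (by omega) hj).mpr h0j
      have h1 := (hiso j 1 hj (by omega)).mpr hj1'
      obtain ⟨j, rfl⟩ : ∃ k, j = k + 2 := ⟨j - 2, by omega⟩
      simp only [List.getElem!_cons_zero, List.getElem!_cons_succ] at h0 h1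
      omega

lemma descList_cons_cons (a b : ℕ) (l : List ℕ) :
    descList (a :: b :: l) = (if b < a then 1 else 0) + descList (b :: l) := by
  simp only [descList, ← List.countP_eq_length_filter, List.length_cons, Nat.add_sub_cancel,
    List.range_succ_eq_map, List.countP_cons, List.countP_map]
  simp [Function.comp_def, Nat.add_comm]

lemma descList_map {f : ℕ → ℕ} : ∀ {w : List ℕ}, StrictMonoOn f {x | x ∈ w} →
    descList (w.map f) = descList w
  | [], _ | [_], _ => rfl
  | a :: b :: l, hf => by
    have hbl : StrictMonoOn f {x | x ∈ b :: l} :=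
      hf.mono fun x hx => List.mem_cons_of_mem a hx
    rw [List.map_cons, List.map_cons, descList_cons_cons, descList_cons_cons, ← List.map_cons,
      descList_map hbl, if_congr (hf.lt_iff_lt (by simp) (by simp)) rfl rfl]

lemma descList_cons_succ_cons {a : ℕ} {t : List ℕ} (ha : a ∉ t) :
    descList (a :: (a + 1) :: t) = descList (a :: t) := by
  cases t with
  | nil => simp [descList]
  | cons c t =>
    have hc : c ≠ a := fun h => ha (h ▸ List.mem_cons_self)
    rw [descList_cons_cons, descList_cons_cons, descList_cons_cons a]
    split_ifs <;> omega

lemma strictMonoOn_reduce_cons {i : ℕ} {t : List ℕ} (ht : i + 1 ∉ t) :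
    StrictMonoOn (fun x => if i < x then x - 1 else x) {x | x ∈ i :: t} :=
  (strictMonoOn_reduce i).mono fun x hx => by
    rcases List.mem_cons.mp hx with rfl | hx
    · exact Nat.succ_ne_self x |>.symm
    · exact fun h => ht (h ▸ hx)

lemma containsPat_reduceGt_cons_iff {p : List ℕ}
    (hmin : ∀ j < p.length, 0 < j → p[0]! < p[j]!)
    (hgap : ∃ j < p.length, 1 < j ∧ p[0]! < p[j]! ∧ p[j]! < p[1]!) {i : ℕ} {t : List ℕ}
    (ht : i + 1 ∉ t) :
    ContainsPat (reduceGt i (i :: t)) p ↔ ContainsPat (i :: (i + 1) :: t) p := by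
  rw [containsPat_cons_succ_cons_iff hmin hgap, reduceGt, containsPat_map_iff
    (strictMonoOn_reduce_cons ht)]

lemma avoidsPat_reduceGt_cons_iff {p : List ℕ} (hp : p = [1,3,2,4] ∨ p = [1,3,4,2]) {i : ℕ}
    {t : List ℕ} (ht : i + 1 ∉ t) :
    AvoidsPat (reduceGt i (i :: t)) p ↔ AvoidsPat (i :: (i + 1) :: t) p := by
  rcases hp with rfl | rfl <;>
    exact not_congr (containsPat_reduceGt_cons_iff (by decide) (by decide) ht)

lemma descList_reduceGt_cons {i : ℕ} {t : List ℕ} (hi : i ∉ t) (ht : i + 1 ∉ t) :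
    descList (reduceGt i (i :: t)) = descList (i :: (i + 1) :: t) := by
  rw [descList_cons_succ_cons hi, reduceGt, descList_map (strictMonoOn_reduce_cons ht)]

lemma nodup_range_map_add_one (n : ℕ) : ((List.range n).map (· + 1)).Nodup :=
  List.nodup_range.map fun _ _ => Nat.add_right_cancel

lemma IsPermList.notMem_of_cons_cons {n a b : ℕ} {t : List ℕ} (h : IsPermList n (a :: b :: t)) :
    a ∉ t ∧ b ∉ t := by
  have hnodup := h.nodup_iff.mpr (nodup_range_map_add_one n)
  simp only [List.nodup_cons, List.mem_cons, not_or] at hnodup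
  exact ⟨hnodup.1.2, hnodup.2.1⟩

lemma raiseGt_range_perm {i n : ℕ} (h : i < n) :
    (raiseGt i ((List.range (n - 1)).map (· + 1))).Perm
      (((List.range n).map (· + 1)).erase (i + 1)) := by
  have hinj : Function.Injective fun x => if i < x then x + 1 else x := fun x y hxy => by
    dsimp only at hxy; split_ifs at hxy <;> omega
  rw [raiseGt, List.perm_ext_iff_of_nodup ((nodup_range_map_add_one _).map hinj)
    ((nodup_range_map_add_one n).erase _)]
  intro y
  simp only [List.map_map, (nodup_range_map_add_one n).mem_erase_iff, List.mem_map, List.mem_range,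
    Function.comp_apply]
  constructor
  · rintro ⟨x, hx, rfl⟩
    refine ⟨by split_ifs <;> omega, (if i < x + 1 then x + 1 else x), ?_, ?_⟩ <;>
      split_ifs <;> omega
  · rintro ⟨hy, x, hx, rfl⟩
    exact ⟨if i < x then x - 1 else x, by split_ifs <;> omega, by split_ifs <;> omega⟩

lemma IsPermList.reduceGt_cons {n i : ℕ} {t : List ℕ} (h : IsPermList n (i :: (i + 1) :: t)) :
    IsPermList (n - 1) (reduceGt i (i :: t)) := by
  have hi : i < n := by
    simpa using h.subset (List.mem_cons_of_mem i List.mem_cons_self)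
  have herase := h.erase (i + 1)
  rw [List.erase_cons_tail (by simp), List.erase_cons_head] at herase
  rw [IsPermList, ← reduceGt_raiseGt i ((List.range (n - 1)).map (· + 1))]
  exact (herase.trans (raiseGt_range_perm hi).symm).map _

lemma IsPermList.cons_succ_raiseGt {n i : ℕ} {u : List ℕ} (h : IsPermList (n - 1) (i :: u)) :
    IsPermList n (i :: (i + 1) :: raiseGt i u) := by
  have hi : i < n := by
    have := h.subset List.mem_cons_self
    simp only [List.mem_map, List.mem_range] at this
    omega
  have hmem : i + 1 ∈ (List.range n).map (· + 1) := by simpa using hi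
  have hraise : (i :: raiseGt i u).Perm (((List.range n).map (· + 1)).erase (i + 1)) :=
    raiseGt_cons_self i u ▸ (h.map _).trans (raiseGt_range_perm hi)
  exact (List.Perm.swap _ _ _).trans ((hraise.cons _).trans (List.perm_cons_erase hmem).symm)

lemma IsPermList.eq_cons_cons {n a b : ℕ} {π : List ℕ} (h : IsPermList n π) (hn : 2 ≤ n)
    (h0 : π[0]! = a) (h1 : π[1]! = b) : ∃ t, π = a :: b :: t := by
  match π, h.length_eq with
  | x :: y :: t, _ =>
    simp only [List.getElem!_cons_zero, List.getElem!_cons_succ] at h0 h1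
    exact ⟨t, by rw [h0, h1]⟩
  | [], hl | [_], hl => simp at hl; omega

lemma IsPermList.eq_cons {n a : ℕ} {σ : List ℕ} (h : IsPermList n σ) (hn : 1 ≤ n)
    (h0 : σ[0]! = a) : ∃ u, σ = a :: u := by
  match σ, h.length_eq with
  | x :: u, _ =>
    simp only [List.getElem!_cons_zero] at h0
    exact ⟨u, by rw [h0]⟩
  | [], hl => simp at hl; omega

theorem stmt10_general (n i : ℕ) (hn : 2 ≤ n) :
    Set.BijOn (fun π : List ℕ => reduceGt i (π.eraseIdx 1))
      {π : List ℕ | IsPermList n π ∧ AvoidsPat π [1,3,2,4] ∧ AvoidsPat π [1,3,4,2] ∧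
        π[0]! = i ∧ π[1]! = i + 1}
      {σ : List ℕ | IsPermList (n - 1) σ ∧ AvoidsPat σ [1,3,2,4] ∧
        AvoidsPat σ [1,3,4,2] ∧ σ[0]! = i} ∧
    ∀ π ∈ {π : List ℕ | IsPermList n π ∧ AvoidsPat π [1,3,2,4] ∧ AvoidsPat π [1,3,4,2] ∧
        π[0]! = i ∧ π[1]! = i + 1},
      descList π = descList (reduceGt i (π.eraseIdx 1)) := by
  refine ⟨Set.InvOn.bijOn (f' := fun σ => i :: (i + 1) :: raiseGt i σ.tail) ⟨?_, ?_⟩ ?_ ?_, ?_⟩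
  · rintro π ⟨hπ, -, -, h0, h1⟩
    obtain ⟨t, rfl⟩ := hπ.eq_cons_cons hn h0 h1
    simp only [List.eraseIdx_cons_succ, List.eraseIdx_cons_zero, reduceGt_cons_self,
      List.tail_cons, raiseGt_reduceGt hπ.notMem_of_cons_cons.2]
  · rintro σ ⟨hσ, -, -, h0⟩
    obtain ⟨u, rfl⟩ := hσ.eq_cons (by omega) h0
    exact reduceGt_cons_raiseGt i u
  · rintro π ⟨hπ, h1324, h1342, h0, h1⟩
    obtain ⟨t, rfl⟩ := hπ.eq_cons_cons hn h0 h1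
    have ht := hπ.notMem_of_cons_cons.2
    exact ⟨hπ.reduceGt_cons, (avoidsPat_reduceGt_cons_iff (.inl rfl) ht).mpr h1324,
      (avoidsPat_reduceGt_cons_iff (.inr rfl) ht).mpr h1342, by simp [reduceGt]⟩
  · rintro σ ⟨hσ, h1324, h1342, h0⟩
    obtain ⟨u, rfl⟩ := hσ.eq_cons (by omega) h0
    have hu := add_one_notMem_raiseGt i u
    rw [← reduceGt_cons_raiseGt i u] at h1324 h1342
    exact ⟨hσ.cons_succ_raiseGt, (avoidsPat_reduceGt_cons_iff (.inl rfl) hu).mp h1324,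
      (avoidsPat_reduceGt_cons_iff (.inr rfl) hu).mp h1342, rfl, rfl⟩
  · rintro π ⟨hπ, -, -, h0, h1⟩
    obtain ⟨t, rfl⟩ := hπ.eq_cons_cons hn h0 h1
    exact (descList_reduceGt_cons hπ.notMem_of_cons_cons.1 hπ.notMem_of_cons_cons.2).symm

/-- Deleting the second letter `i+1` and reducing letters above `i` is a
descent-preserving bijection from `{1324,1342}`-avoiders of `[n]` starting
`i, i+1` onto `{1324,1342}`-avoiders of `[n-1]` starting with `i`. -/
theorem stmt10 (n i : ℕ) (hn : 2 ≤ n) (hi1 : 1 ≤ i) (hi : i ≤ n - 1) :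
    Set.BijOn (fun π : List ℕ => reduceGt i (π.eraseIdx 1))
      {π : List ℕ | IsPermList n π ∧ AvoidsPat π [1,3,2,4] ∧ AvoidsPat π [1,3,4,2] ∧
        π[0]! = i ∧ π[1]! = i + 1}
      {σ : List ℕ | IsPermList (n - 1) σ ∧ AvoidsPat σ [1,3,2,4] ∧
        AvoidsPat σ [1,3,4,2] ∧ σ[0]! = i} ∧
    ∀ π ∈ {π : List ℕ | IsPermList n π ∧ AvoidsPat π [1,3,2,4] ∧ AvoidsPat π [1,3,4,2] ∧
        π[0]! = i ∧ π[1]! = i + 1},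
      descList π = descList (reduceGt i (π.eraseIdx 1)) :=
  stmt10_general n i hn
end

section
/- Define a triangular array S_{n,k} by S_{1,1} = S_{2,1} = S_{2,2} = 1, the convention S_{n,0} = 0, the recurrence S_{n,k} = S_{n,k-1} + 2 S_{n-1,k} - S_{n-1,k-1} for 1 ≤ k ≤ n-2, and S_{n,n} = S_{n,n-1} = S_{n,n-2} for n ≥ 3. Then for all n ≥ 1, the row sum ∑_{k=1}^{n} S_{n,k} equals the n-th large Schröder number R_n, where R_1 = 1 and R_{n+1} = R_n + ∑_{k=1}^{n} R_k R_{n+1-k} for n ≥ 1. -/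
/-!
Write `T_n` for the `n`-th row sum, `e_j(k) = S_{k+j,k}` for the `j`-th diagonal below the main
one, and `r_c = R_{c+1}`, so that the Schröder recurrence reads `r_{c+1} = r_c + (r * r)_c`.
Summing the defining recurrence along a row gives `S_{n+1,k} = S_{n,k} + ∑_{l ≤ k} S_{n,l}`: each
diagonal is the previous one plus its row prefix sums. Hence, by induction on `i` simultaneously
for all `j ≥ 1`, the prefix sums are convolutions, `∑_{k ≤ i} S_{i+j,k} = (r * e_j)_i`; the step
takes the sum of row `i+1+j` from diagonal `j+1` at `i` and expands `e_{j+1}` through diagonal `j`,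
where the Schröder recurrence absorbs the double convolution. The first and the main diagonal
consist of row sums, `S_{n+1,n} = T_n` and `S_{n+2,n+2} = T_{n+1}`, so for `j = 1` the identity is
`T_{i+1} - T_i = ∑_{a+b=i} R_{a+1} T_b`: the row sums satisfy the Schröder recurrence.
-/

open Finset

theorem sum_antidiagonal_conv_assoc {A : Type*} [CommSemiring A] (f g h : ℕ → A) (i : ℕ) :
    ∑ p ∈ antidiagonal i, f p.1 * ∑ q ∈ antidiagonal p.2, g q.1 * h q.2 =
      ∑ p ∈ antidiagonal i, (∑ q ∈ antidiagonal p.1, f q.1 * g q.2) * h p.2 := by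
  simpa [PowerSeries.coeff_mul] using congrArg (PowerSeries.coeff i)
    (mul_assoc (PowerSeries.mk f) (PowerSeries.mk g) (PowerSeries.mk h)).symm

theorem sum_antidiagonal_succ_of_schroder {A : Type*} [CommSemiring A] {r : ℕ → A}
    (hr : ∀ c, r (c + 1) = r c + ∑ p ∈ antidiagonal c, r p.1 * r p.2) (e : ℕ → A) (i : ℕ) :
    ∑ p ∈ antidiagonal (i + 1), r p.1 * e p.2 =
      r 0 * e (i + 1) +
        ∑ p ∈ antidiagonal i, r p.1 * (e p.2 + ∑ q ∈ antidiagonal p.2, r q.1 * e q.2) := by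
  simp only [Nat.sum_antidiagonal_succ, hr, add_mul, mul_add, sum_add_distrib,
    sum_antidiagonal_conv_assoc]

theorem sum_Icc_one_eq_sum_range {M : Type*} [AddCommMonoid M] (f : ℕ → M) (n : ℕ) :
    ∑ k ∈ Icc 1 n, f k = ∑ k ∈ range n, f (k + 1) := by
  rw [range_eq_Ico, sum_Ico_add' f 0 n 1]
  rfl

theorem schroder_succ_succ {A : Type*} [Semiring A] {R : ℕ → A}
    (hRrec : ∀ n, 1 ≤ n → R (n + 1) = R n + ∑ k ∈ Icc 1 n, R k * R (n + 1 - k)) (c : ℕ) :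
    R (c + 2) = R (c + 1) + ∑ p ∈ antidiagonal c, R (p.1 + 1) * R (p.2 + 1) := by
  rw [hRrec (c + 1) (by omega), sum_Icc_one_eq_sum_range,
    Nat.sum_antidiagonal_eq_sum_range_succ_mk]
  congr 1
  refine sum_congr rfl fun k hk => ?_
  rw [mem_range] at hk
  congr 2
  omega

section Triangle

def rowSum (S : ℕ → ℕ → ℤ) (n : ℕ) : ℤ := ∑ k ∈ range (n + 1), S n k

variable {S : ℕ → ℕ → ℤ}

theorem sum_Icc_one_eq_rowSum (hS0 : ∀ n, S n 0 = 0) (n : ℕ) :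
    ∑ k ∈ Icc 1 n, S n k = rowSum S n := by
  rw [rowSum, sum_range_succ', hS0, add_zero, sum_Icc_one_eq_sum_range]

theorem succ_row_eq_add_prefix (hS0 : ∀ n, S n 0 = 0)
    (hrec : ∀ n k, 1 ≤ k → k ≤ n - 2 →
      S n k = S n (k - 1) + 2 * S (n - 1) k - S (n - 1) (k - 1))
    {n k : ℕ} (hk : k < n) : S (n + 1) k = S n k + ∑ l ∈ range (k + 1), S n l := by
  induction k with
  | zero => simp [hS0]
  | succ k ih =>
    have h := hrec (n + 1) (k + 1) (by omega) (by omega)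
    simp only [Nat.add_sub_cancel] at h
    rw [sum_range_succ, h, ih (by omega)]
    ring

theorem diag_eq_subdiag (hS21 : S 2 1 = 1) (hS22 : S 2 2 = 1)
    (htop : ∀ n, 3 ≤ n → S n n = S n (n - 2) ∧ S n (n - 1) = S n (n - 2))
    (n : ℕ) : S (n + 2) (n + 2) = S (n + 2) (n + 1) := by
  match n with
  | 0 => rw [hS22, hS21]
  | n + 1 =>
    obtain ⟨h₁, h₂⟩ := htop (n + 3) (by omega)
    exact h₁.trans h₂.symm

theorem subdiag_eq_rowSum (hS11 : S 1 1 = 1) (hS21 : S 2 1 = 1) (hS22 : S 2 2 = 1)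
    (hS0 : ∀ n, S n 0 = 0)
    (hrec : ∀ n k, 1 ≤ k → k ≤ n - 2 →
      S n k = S n (k - 1) + 2 * S (n - 1) k - S (n - 1) (k - 1))
    (htop : ∀ n, 3 ≤ n → S n n = S n (n - 2) ∧ S n (n - 1) = S n (n - 2))
    (n : ℕ) : S (n + 1) n = rowSum S n := by
  match n with
  | 0 => simp [rowSum, hS0]
  | 1 => simp [rowSum, sum_range_succ, hS0, hS11, hS21]
  | m + 2 =>
    have h : S (m + 3) (m + 2) = S (m + 3) (m + 1) := (htop (m + 3) (by omega)).2
    rw [h, succ_row_eq_add_prefix hS0 hrec (by omega), rowSum,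
      sum_range_succ _ (m + 2), diag_eq_subdiag hS21 hS22 htop, add_comm]

theorem sum_range_row_eq_conv_diag (hS0 : ∀ n, S n 0 = 0)
    (hrec : ∀ n k, 1 ≤ k → k ≤ n - 2 →
      S n k = S n (k - 1) + 2 * S (n - 1) k - S (n - 1) (k - 1))
    {R : ℕ → ℤ} (hR1 : R 1 = 1)
    (hR : ∀ c, R (c + 2) = R (c + 1) + ∑ p ∈ antidiagonal c, R (p.1 + 1) * R (p.2 + 1))
    (i : ℕ) {j : ℕ} (hj : 1 ≤ j) :
    ∑ k ∈ range (i + 1), S (i + j) k = ∑ p ∈ antidiagonal i, R (p.1 + 1) * S (p.2 + j) p.2 := by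
  induction i using Nat.strong_induction_on generalizing j with
  | _ i ih =>
  match i with
  | 0 => simp [hS0]
  | i + 1 =>
    have hdiag : ∀ p ∈ antidiagonal i, R (p.1 + 1) * S (p.2 + (j + 1)) p.2 =
        R (p.1 + 1) *
          (S (p.2 + j) p.2 + ∑ q ∈ antidiagonal p.2, R (q.1 + 1) * S (q.2 + j) q.2) := by
      intro p hp
      have hp2 := mem_antidiagonal.mp hp
      rw [← add_assoc, succ_row_eq_add_prefix hS0 hrec (by omega), ih p.2 (by omega) hj]
    have hconv := sum_antidiagonal_succ_of_schroder (r := fun a => R (a + 1)) hR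
      (fun b => S (b + j) b) i
    simp only [zero_add, hR1, one_mul] at hconv
    rw [hconv, sum_range_succ, show i + 1 + j = i + (j + 1) by ring, ih i (by omega) (by omega),
      sum_congr rfl hdiag, add_comm]

theorem rowSum_succ_succ (hS11 : S 1 1 = 1) (hS21 : S 2 1 = 1) (hS22 : S 2 2 = 1)
    (hS0 : ∀ n, S n 0 = 0)
    (hrec : ∀ n k, 1 ≤ k → k ≤ n - 2 →
      S n k = S n (k - 1) + 2 * S (n - 1) k - S (n - 1) (k - 1))
    (htop : ∀ n, 3 ≤ n → S n n = S n (n - 2) ∧ S n (n - 1) = S n (n - 2))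
    {R : ℕ → ℤ} (hR1 : R 1 = 1)
    (hR : ∀ c, R (c + 2) = R (c + 1) + ∑ p ∈ antidiagonal c, R (p.1 + 1) * R (p.2 + 1))
    (n : ℕ) :
    rowSum S (n + 2) =
      rowSum S (n + 1) + ∑ p ∈ antidiagonal n, R (p.1 + 1) * rowSum S (p.2 + 1) := by
  have hsub := subdiag_eq_rowSum hS11 hS21 hS22 hS0 hrec htop
  have hrow : ∑ k ∈ range (n + 2), S (n + 2) k =
      ∑ p ∈ antidiagonal (n + 1), R (p.1 + 1) * S (p.2 + 1) p.2 :=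
    sum_range_row_eq_conv_diag hS0 hrec hR1 hR (n + 1) le_rfl
  rw [Nat.sum_antidiagonal_succ', hS0, mul_zero, zero_add] at hrow
  simp only [hsub] at hrow
  rw [rowSum, sum_range_succ, hrow, diag_eq_subdiag hS21 hS22 htop, hsub, add_comm]

theorem rowSum_succ_eq (hS11 : S 1 1 = 1) (hS21 : S 2 1 = 1) (hS22 : S 2 2 = 1)
    (hS0 : ∀ n, S n 0 = 0)
    (hrec : ∀ n k, 1 ≤ k → k ≤ n - 2 →
      S n k = S n (k - 1) + 2 * S (n - 1) k - S (n - 1) (k - 1))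
    (htop : ∀ n, 3 ≤ n → S n n = S n (n - 2) ∧ S n (n - 1) = S n (n - 2))
    {R : ℕ → ℤ} (hR1 : R 1 = 1)
    (hR : ∀ c, R (c + 2) = R (c + 1) + ∑ p ∈ antidiagonal c, R (p.1 + 1) * R (p.2 + 1))
    (n : ℕ) : rowSum S (n + 1) = R (n + 1) := by
  induction n using Nat.strong_induction_on with
  | _ n ih =>
  match n with
  | 0 => simp [rowSum, sum_range_succ, hS0, hS11, hR1]
  | n + 1 =>
    rw [rowSum_succ_succ hS11 hS21 hS22 hS0 hrec htop hR1 hR, hR, ih n (by omega)]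
    congr 1
    refine sum_congr rfl fun p hp => ?_
    have hp2 := mem_antidiagonal.mp hp
    rw [ih p.2 (by omega)]

end Triangle

/-- The row sums of the triangular array `S_{n,k}` are the large Schröder
numbers. -/
theorem stmt15 (S : ℕ → ℕ → ℤ) (R : ℕ → ℤ)
    (hS11 : S 1 1 = 1) (hS21 : S 2 1 = 1) (hS22 : S 2 2 = 1)
    (hS0 : ∀ n, S n 0 = 0)
    (hrec : ∀ n k, 1 ≤ k → k ≤ n - 2 →
      S n k = S n (k - 1) + 2 * S (n - 1) k - S (n - 1) (k - 1))
    (htop : ∀ n, 3 ≤ n → S n n = S n (n - 2) ∧ S n (n - 1) = S n (n - 2))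
    (hR1 : R 1 = 1)
    (hRrec : ∀ n, 1 ≤ n → R (n + 1) = R n + ∑ k ∈ Finset.Icc 1 n, R k * R (n + 1 - k)) :
    ∀ n, 1 ≤ n → ∑ k ∈ Finset.Icc 1 n, S n k = R n := by
  intro n hn
  obtain ⟨m, rfl⟩ : ∃ m, n = m + 1 := ⟨n - 1, by omega⟩
  rw [sum_Icc_one_eq_rowSum hS0]
  exact rowSum_succ_eq hS11 hS21 hS22 hS0 hrec htop hR1 (schroder_succ_succ hRrec) m
end
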